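/- Under the trajectory distribution induced by any recommendation strategy g^ai, for every time t < T, every history realization h_t of positive probability, and every u^h ∈ 𝒰 such that P(U_t^h = u^h | H_t = h_t) > 0, the one-step predicted observation distribution depends on h_t only through the belief b_t^x and is independent of the human control law g^h: for all y' ∈ 𝒴, P(Y_{t+1} = y' | H_t = h_t, U_t^h = u^h) = Σ_{x' ∈ 𝒳} Σ_{x ∈ 𝒳} P(y'|x') · P(x'|x, u^h) · b_t^x(x). -/

import Mathlib

open scoped ENNReal

noncomputable section

namespace CPHS

variable {𝒳 𝒮 𝒴 𝒰 𝒲 𝒵 𝒩 : Type}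

/-- i.i.d. product PMF on vectors of length `n`. -/
def pmfVec {α : Type} (p : PMF α) : (n : ℕ) → PMF (Fin n → α)
  | 0 => PMF.pure Fin.elim0
  | n + 1 => (pmfVec p n).bind fun v => p.map fun a => Fin.snoc v a

/-- Safe getter for a vector of length `m + 1`. -/
def vget {α : Type} {m : ℕ} (v : Fin (m + 1) → α) (t : ℕ) : α :=
  v ⟨t % (m + 1), Nat.mod_lt _ (Nat.succ_pos m)⟩

/-- History at time `t`: observations `Y_{0:t}` and past actions `U^h_{0:t-1}`, `U^ai_{0:t-1}`. -/
def Hist (𝒴 𝒰 : Type) (t : ℕ) : Type :=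
  (Fin (t + 1) → 𝒴) × (Fin t → 𝒰) × (Fin t → 𝒰)

/-- Extension of a history by one step. -/
def Hist.ext {t : ℕ} (h : Hist 𝒴 𝒰 t) (y : 𝒴) (uh uai : 𝒰) : Hist 𝒴 𝒰 (t + 1) :=
  (Fin.snoc h.1 y, Fin.snoc h.2.1 uh, Fin.snoc h.2.2 uai)

/-- A recommendation strategy of the AI platform. -/
def Strat (𝒴 𝒰 : Type) : Type := (t : ℕ) → Hist 𝒴 𝒰 t → 𝒰

/-- The human–AI system model. -/
structure System (𝒳 𝒮 𝒴 𝒰 𝒲 𝒵 𝒩 : Type) where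
  T : ℕ
  pX0 : PMF 𝒳
  pS0 : PMF 𝒮
  pW : PMF 𝒲
  pZ : PMF 𝒵
  pN : PMF 𝒩
  f : 𝒳 → 𝒰 → 𝒲 → 𝒳
  o : 𝒳 → 𝒵 → 𝒴
  fh : 𝒮 → 𝒰 → 𝒴 → 𝒩 → 𝒮
  gh : 𝒮 → 𝒰 → 𝒰

namespace System

variable (M : System 𝒳 𝒮 𝒴 𝒰 𝒲 𝒵 𝒩)

/-- Primitive sample space: initial states and all noises. -/
abbrev Ω : Type :=
  𝒳 × 𝒮 × (Fin (M.T + 1) → 𝒲) × (Fin (M.T + 1) → 𝒵) × (Fin (M.T + 1) → 𝒩)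

/-- Joint PMF of the mutually independent primitive random variables. -/
def pΩ : PMF M.Ω :=
  M.pX0.bind fun x => M.pS0.bind fun s =>
    (pmfVec M.pW (M.T + 1)).bind fun w =>
      (pmfVec M.pZ (M.T + 1)).bind fun z =>
        (pmfVec M.pN (M.T + 1)).map fun n => (x, s, w, z, n)

/-- Trajectory `(X_t, S_t, H_t)` generated by strategy `g` from primitive randomness `ω`. -/
def traj (g : Strat 𝒴 𝒰) (ω : M.Ω) : (t : ℕ) → 𝒳 × 𝒮 × Hist 𝒴 𝒰 t
  | 0 => (ω.1, ω.2.1, (fun _ => M.o ω.1 (vget ω.2.2.2.1 0), Fin.elim0, Fin.elim0))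
  | t + 1 =>
      let p : 𝒳 × 𝒮 × Hist 𝒴 𝒰 t := traj g ω t
      let uai := g t p.2.2
      let uh := M.gh p.2.1 uai
      let x' := M.f p.1 uh (vget ω.2.2.1 t)
      let y' := M.o x' (vget ω.2.2.2.1 (t + 1))
      let s' := M.fh p.2.1 uai y' (vget ω.2.2.2.2 t)
      (x', s', Hist.ext p.2.2 y' uh uai)

/-- System state process. -/
def X (g : Strat 𝒴 𝒰) (ω : M.Ω) (t : ℕ) : 𝒳 := (M.traj g ω t).1
/-- Internal state process. -/
def S (g : Strat 𝒴 𝒰) (ω : M.Ω) (t : ℕ) : 𝒮 := (M.traj g ω t).2.1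
/-- History process. -/
def H (g : Strat 𝒴 𝒰) (ω : M.Ω) (t : ℕ) : Hist 𝒴 𝒰 t := (M.traj g ω t).2.2
/-- Observation process. -/
def Y (g : Strat 𝒴 𝒰) (ω : M.Ω) (t : ℕ) : 𝒴 := (M.H g ω t).1 (Fin.last t)
/-- AI recommendation process. -/
def Uai (g : Strat 𝒴 𝒰) (ω : M.Ω) (t : ℕ) : 𝒰 := g t (M.H g ω t)
/-- Human action process. -/
def Uh (g : Strat 𝒴 𝒰) (ω : M.Ω) (t : ℕ) : 𝒰 := M.gh (M.S g ω t) (M.Uai g ω t)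

/-- Probability of an event about the trajectory. -/
def pr (A : Set M.Ω) : ℝ := (M.pΩ.toOuterMeasure A).toReal

/-- Conditional probability `P(A | B)`. -/
def cpr (A B : Set M.Ω) : ℝ := M.pr (A ∩ B) / M.pr B

/-- Observation kernel `P(y | x')`. -/
def Po (y : 𝒴) (x' : 𝒳) : ℝ := (M.pZ.toOuterMeasure {z | M.o x' z = y}).toReal
/-- Transition kernel `P(x' | x, u)`. -/
def Pt (x' x : 𝒳) (u : 𝒰) : ℝ := (M.pW.toOuterMeasure {w | M.f x u w = x'}).toReal
/-- Internal-state kernel `P^h(s' | s, u, y)`. -/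
def Pn (s' s : 𝒮) (u : 𝒰) (y : 𝒴) : ℝ := (M.pN.toOuterMeasure {n | M.fh s u y n = s'}).toReal

/-- AI belief on the internal state, `b_t^s`. -/
def bS (g : Strat 𝒴 𝒰) {t : ℕ} (h : Hist 𝒴 𝒰 t) (s : 𝒮) : ℝ :=
  M.cpr {ω | M.S g ω t = s} {ω | M.H g ω t = h}

/-- AI belief on the system state, `b_t^x`. -/
def bX (g : Strat 𝒴 𝒰) {t : ℕ} (h : Hist 𝒴 𝒰 t) (x : 𝒳) : ℝ :=
  M.cpr {ω | M.X g ω t = x} {ω | M.H g ω t = h}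

/-- Conditional expectation `E[φ | B]`. -/
def cexp [Fintype 𝒳] [Fintype 𝒮] [Fintype 𝒲] [Fintype 𝒵] [Fintype 𝒩]
    (B : Set M.Ω) (φ : M.Ω → ℝ) : ℝ :=
  (∑ ω : M.Ω, Set.indicator B φ ω * (M.pΩ ω).toReal) / M.pr B

/-- Expected total discounted reward of a strategy. -/
def J [Fintype 𝒳] [Fintype 𝒮] [Fintype 𝒲] [Fintype 𝒵] [Fintype 𝒩]
    (g : Strat 𝒴 𝒰) (r : 𝒳 → 𝒰 → ℝ) (γ : ℝ) : ℝ :=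
  ∑ t ∈ Finset.range (M.T + 1), γ ^ t *
    ∑ ω : M.Ω, (M.pΩ ω).toReal * r (M.X g ω t) (M.Uh g ω t)


open Classical in
/-- The human's true conditional action distribution `P(U_t^h = u | h_t, u^ai)`. -/
def actDist [Fintype 𝒮] (g : Strat 𝒴 𝒰) {t : ℕ} (h : Hist 𝒴 𝒰 t) (uai u : 𝒰) : ℝ :=
  ∑ s, (if u = M.gh s uai then (1 : ℝ) else 0) * M.bS g h s

open Classical in
/-- One-step Bellman operator on histories, using the beliefs `b_t^s, b_t^x`. -/
def Qstep [Fintype 𝒳] [Fintype 𝒮] [Fintype 𝒴] [Fintype 𝒰]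
    (g : Strat 𝒴 𝒰) (r : 𝒳 → 𝒰 → ℝ) (γ : ℝ) {t : ℕ} (h : Hist 𝒴 𝒰 t) (u : 𝒰)
    (Vnext : Hist 𝒴 𝒰 (t + 1) → ℝ) : ℝ :=
  (∑ x, ∑ s, r x (M.gh s u) * M.bX g h x * M.bS g h s) +
    γ * ∑ y' : 𝒴, ∑ uh : 𝒰,
      (∑ s, (if uh = M.gh s u then (1 : ℝ) else 0) * M.bS g h s) *
        (∑ x', ∑ x, M.Po y' x' * M.Pt x' x uh * M.bX g h x) * Vnext (h.ext y' uh u)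

/-- Backward value recursion on histories; `n` is the number of remaining stages,
so that `V̄_t = Vbar (T + 1 - t) t` and `V̄_{T+1} ≡ 0`. -/
def Vbar [Fintype 𝒳] [Fintype 𝒮] [Fintype 𝒴] [Fintype 𝒰] [Nonempty 𝒰]
    (g : Strat 𝒴 𝒰) (r : 𝒳 → 𝒰 → ℝ) (γ : ℝ) : (n : ℕ) → (t : ℕ) → Hist 𝒴 𝒰 t → ℝ
  | 0, _, _ => 0
  | n + 1, t, h =>
      Finset.univ.sup' Finset.univ_nonempty fun u =>
        M.Qstep g r γ h u (Vbar g r γ n (t + 1))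

/-- `Q̄_t(h_t, u)`, defined through `V̄_{t+1}`. -/
def Qbar [Fintype 𝒳] [Fintype 𝒮] [Fintype 𝒴] [Fintype 𝒰] [Nonempty 𝒰]
    (g : Strat 𝒴 𝒰) (r : 𝒳 → 𝒰 → ℝ) (γ : ℝ) (t : ℕ) (h : Hist 𝒴 𝒰 t) (u : 𝒰) : ℝ :=
  M.Qstep g r γ h u (M.Vbar g r γ (M.T - t) (t + 1))

/-- `V̄_t(h_t) = max_u Q̄_t(h_t, u)`. -/
def VbarT [Fintype 𝒳] [Fintype 𝒮] [Fintype 𝒴] [Fintype 𝒰] [Nonempty 𝒰]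
    (g : Strat 𝒴 𝒰) (r : 𝒳 → 𝒰 → ℝ) (γ : ℝ) (t : ℕ) (h : Hist 𝒴 𝒰 t) : ℝ :=
  M.Vbar g r γ (M.T + 1 - t) t h

/-- Bayes-filter update `ψ^x` of the system-state belief. -/
def bayesX [Fintype 𝒳] (b : 𝒳 → ℝ) (uh : 𝒰) (y : 𝒴) : 𝒳 → ℝ := fun x' =>
  (∑ x, M.Po y x' * M.Pt x' x uh * b x) /
    (∑ x'', ∑ x, M.Po y x'' * M.Pt x'' x uh * b x)

/-- One-step Bellman operator of the approximate human model on `Sh × Δ(𝒳)`. -/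
def Qhatstep {Sh : Type} [Fintype 𝒳] [Fintype 𝒴] [Fintype 𝒰]
    (μhat : Sh → 𝒰 → PMF 𝒰) (ψhat : Sh → 𝒰 → 𝒴 → Sh) (r : 𝒳 → 𝒰 → ℝ) (γ : ℝ)
    (π : Sh × (𝒳 → ℝ)) (u : 𝒰) (Vnext : Sh × (𝒳 → ℝ) → ℝ) : ℝ :=
  (∑ x, ∑ uh, r x uh * π.2 x * (μhat π.1 u uh).toReal) +
    γ * ∑ y' : 𝒴, ∑ uh : 𝒰, (μhat π.1 u uh).toReal *
      (∑ x', ∑ x, M.Po y' x' * M.Pt x' x uh * π.2 x) *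
      Vnext (ψhat π.1 u y', M.bayesX π.2 uh y')

/-- Approximate value recursion; `n` is the number of remaining stages, so that
`V̂_t = Vhat (T + 1 - t)` and `V̂_{T+1} ≡ 0`. -/
def Vhat {Sh : Type} [Fintype 𝒳] [Fintype 𝒴] [Fintype 𝒰] [Nonempty 𝒰]
    (μhat : Sh → 𝒰 → PMF 𝒰) (ψhat : Sh → 𝒰 → 𝒴 → Sh) (r : 𝒳 → 𝒰 → ℝ) (γ : ℝ) :
    (n : ℕ) → Sh × (𝒳 → ℝ) → ℝ
  | 0, _ => 0
  | n + 1, π =>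
      Finset.univ.sup' Finset.univ_nonempty fun u =>
        M.Qhatstep μhat ψhat r γ π u (Vhat μhat ψhat r γ n)

/-- `Q̂_t(π̂, u)`, defined through `V̂_{t+1}`. -/
def Qhat {Sh : Type} [Fintype 𝒳] [Fintype 𝒴] [Fintype 𝒰] [Nonempty 𝒰]
    (μhat : Sh → 𝒰 → PMF 𝒰) (ψhat : Sh → 𝒰 → 𝒴 → Sh) (r : 𝒳 → 𝒰 → ℝ) (γ : ℝ)
    (t : ℕ) (π : Sh × (𝒳 → ℝ)) (u : 𝒰) : ℝ :=
  M.Qhatstep μhat ψhat r γ π u (M.Vhat μhat ψhat r γ (M.T - t))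

end System

/-- Total variation distance between two distributions on a finite type,
given as real-valued mass functions. -/
def tv {α : Type} [Fintype α] (p q : α → ℝ) : ℝ := (1 / 2) * ∑ a, |p a - q a|


/-!
Given `H_t = h`, the trajectory splits into a part driven by the system randomness
`(X₀, W, Z)` and a part driven by the human randomness `(S₀, N)`: exchanging the human randomness
of two outcomes with the same history `h` keeps the history, the `X_t` of the first and the `S_t`
of the second. As the two kinds of randomness are independent, `X_t` and `U_t^h` are conditionally
independent given `H_t`, so conditioning also on `U_t^h = u^h` leaves the belief `b_t^x` unchanged.
Finally `Y_{t+1} = o(f(X_t, U_t^h, W_t), Z_{t+1})`, where the fresh noise `(W_t, Z_{t+1})` is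
independent of everything up to time `t`.
-/

open Finset Function

theorem pmfVec_apply {α : Type} (p : PMF α) (n : ℕ) (v : Fin n → α) :
    pmfVec p n v = ∏ i, p (v i) := by
  induction n with
  | zero => simp [pmfVec, Subsingleton.elim v Fin.elim0]
  | succ n ih =>
    have hv : ∀ u a, v = Fin.snoc u a ↔ u = Fin.init v ∧ a = v (Fin.last n) := by
      intro u a
      conv_lhs => rw [← Fin.snoc_init_self v]
      rw [Fin.snoc_inj]
      tauto
    rw [pmfVec, PMF.bind_apply, tsum_eq_single (Fin.init v), PMF.map_apply,
      tsum_eq_single (v (Fin.last n))]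
    · simp [ih, Fin.prod_univ_castSucc, Fin.init]
    · intro a ha
      simp [hv, ha]
    · intro u hu
      simp [hv, hu]

theorem toReal_toOuterMeasure_eq_sum {α : Type} [Fintype α] (p : PMF α) (s : Set α) :
    (p.toOuterMeasure s).toReal = ∑ a, s.indicator (fun a => (p a).toReal) a := by
  rw [PMF.toOuterMeasure_apply_fintype, ENNReal.toReal_sum fun a _ => ?_]
  · refine sum_congr rfl fun a _ => ?_
    by_cases ha : a ∈ s <;> simp [ha]
  · exact ne_top_of_le_ne_top ENNReal.one_ne_top
      (Set.indicator_apply_le' (fun _ => p.coe_le_one a) fun _ => zero_le_one)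

theorem sum_toReal_apply {α : Type} [Fintype α] (p : PMF α) : ∑ a, (p a).toReal = 1 := by
  rw [← ENNReal.toReal_sum fun a _ => p.apply_ne_top a,
    ← tsum_fintype (L := SummationFilter.unconditional _), p.tsum_coe, ENNReal.toReal_one]

theorem prod_update_mul {ι M α : Type} [Fintype ι] [DecidableEq ι] [CommMonoid M]
    (p : α → M) (v : ι → α) (i : ι) (a : α) :
    (∏ j, p (update v i a j)) * p (v i) = (∏ j, p (v j)) * p a := by
  rw [← mul_prod_erase univ _ (mem_univ i), ← mul_prod_erase univ (fun j => p (v j)) (mem_univ i),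
    update_self, prod_congr rfl fun j hj => by rw [update_of_ne (ne_of_mem_erase hj)]]
  ac_rfl

theorem vget_of_lt {α : Type} {m : ℕ} (v : Fin (m + 1) → α) {k : ℕ} (hk : k < m + 1) :
    vget v k = v ⟨k, hk⟩ := by
  simp only [vget, Nat.mod_eq_of_lt hk]

theorem vget_update_of_lt {α : Type} {m : ℕ} (v : Fin (m + 1) → α) (i : Fin (m + 1)) (a : α)
    {k : ℕ} (hk : k < i) : vget (update v i a) k = vget v k := by
  rw [vget_of_lt _ (hk.trans i.isLt), vget_of_lt _ (hk.trans i.isLt),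
    update_of_ne (Fin.ne_of_val_ne hk.ne)]

theorem vget_update_self {α : Type} {m : ℕ} (v : Fin (m + 1) → α) (i : Fin (m + 1)) (a : α) :
    vget (update v i a) i = a := by
  rw [vget_of_lt _ i.isLt, update_self]

/-- `r ω a` overwrites the coordinate `c ω`, of law `q`, by `a`. Reindexing by the involution
`(ω, a) ↦ (r ω a, c ω)` shows that this coordinate is independent of every `r`-invariant event. -/
theorem sum_indicator_mul_eq_of_resample {Ω Γ : Type} [Fintype Ω] [Fintype Γ]
    (w : Ω → ℝ) (q : Γ → ℝ) (hq : ∑ a, q a = 1) (c : Ω → Γ) (r : Ω → Γ → Ω)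
    (hc : ∀ ω a, c (r ω a) = a) (hr : ∀ ω a, r (r ω a) (c ω) = ω)
    (hw : ∀ ω a, w (r ω a) * q (c ω) = w ω * q a)
    {A : Set Ω} (hA : ∀ ω a, r ω a ∈ A ↔ ω ∈ A) (G : Γ → ℝ) :
    ∑ ω, A.indicator w ω * G (c ω) = (∑ ω, A.indicator w ω) * ∑ a, q a * G a := by
  have hwA : ∀ ω a, A.indicator w (r ω a) * q (c ω) = A.indicator w ω * q a := by
    intro ω a
    by_cases hω : ω ∈ A
    · rw [Set.indicator_of_mem ((hA ω a).2 hω), Set.indicator_of_mem hω, hw]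
    · rw [Set.indicator_of_notMem (mt (hA ω a).1 hω), Set.indicator_of_notMem hω, zero_mul,
        zero_mul]
  have hσ : Involutive fun x : Ω × Γ => (r x.1 x.2, c x.1) := fun x => by simp [hr, hc]
  calc ∑ ω, A.indicator w ω * G (c ω)
      = ∑ x : Ω × Γ, A.indicator w x.1 * G (c x.1) * q x.2 := by
        simp [Fintype.sum_prod_type, ← mul_sum, hq]
    _ = ∑ x : Ω × Γ, A.indicator w x.1 * (q x.2 * G x.2) := by
        refine (Fintype.sum_bijective _ hσ.bijective _ _ fun x => ?_).symm
        dsimp only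
        rw [hc, mul_right_comm, hwA, mul_assoc]
    _ = (∑ ω, A.indicator w ω) * ∑ a, q a * G a := by
        rw [Fintype.sum_prod_type, sum_mul_sum]

/-- `mix p q` combines the first factor of `p` with the second factor of `q`. Reindexing by the
involution `(p, q) ↦ (mix p q, mix q p)` gives the conditional independence of `E` and `F`
given `R`. -/
theorem sum_indicator_inter_mul_eq_of_swap {Ω : Type} [Fintype Ω] (w : Ω → ℝ)
    (mix : Ω → Ω → Ω) (hmix : ∀ p q, mix (mix p q) (mix q p) = p)
    (hw : ∀ p q, w (mix p q) * w (mix q p) = w p * w q) {R E F : Set Ω}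
    (hR : ∀ p ∈ R, ∀ q ∈ R, mix p q ∈ R) (hE : ∀ p ∈ R, ∀ q ∈ R, mix p q ∈ E ↔ p ∈ E)
    (hF : ∀ p ∈ R, ∀ q ∈ R, mix p q ∈ F ↔ q ∈ F) :
    (∑ ω, (R ∩ E ∩ F).indicator w ω) * ∑ ω, R.indicator w ω
      = (∑ ω, (R ∩ E).indicator w ω) * ∑ ω, (R ∩ F).indicator w ω := by
  have hzero : ∀ (A B : Set Ω) (p q : Ω), ¬ (p ∈ A ∧ q ∈ B) →
      A.indicator w p * B.indicator w q = 0 := by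
    intro A B p q h
    rcases not_and_or.1 h with h | h <;> simp [h]
  have key : ∀ p q, (R ∩ E ∩ F).indicator w (mix p q) * R.indicator w (mix q p)
      = (R ∩ E).indicator w p * (R ∩ F).indicator w q := by
    intro p q
    by_cases hpq : p ∈ R ∩ E ∧ q ∈ R ∩ F
    · obtain ⟨⟨hp, hpE⟩, hq, hqF⟩ := hpq
      have hmem : mix p q ∈ R ∩ E ∩ F :=
        ⟨⟨hR p hp q hq, (hE p hp q hq).2 hpE⟩, (hF p hp q hq).2 hqF⟩
      rw [Set.indicator_of_mem hmem, Set.indicator_of_mem (hR q hq p hp),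
        Set.indicator_of_mem (show p ∈ R ∩ E from ⟨hp, hpE⟩),
        Set.indicator_of_mem (show q ∈ R ∩ F from ⟨hq, hqF⟩), hw]
    · rw [hzero _ _ _ _ hpq, hzero]
      rintro ⟨⟨⟨hpqR, hpqE⟩, hpqF⟩, hqpR⟩
      have hp : p ∈ R := hmix p q ▸ hR _ hpqR _ hqpR
      have hq : q ∈ R := hmix q p ▸ hR _ hqpR _ hpqR
      exact hpq ⟨⟨hp, (hE p hp q hq).1 hpqE⟩, hq, (hF p hp q hq).1 hpqF⟩
  calc (∑ ω, (R ∩ E ∩ F).indicator w ω) * ∑ ω, R.indicator w ω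
      = ∑ x : Ω × Ω, (R ∩ E ∩ F).indicator w x.1 * R.indicator w x.2 := by
        rw [Fintype.sum_prod_type, sum_mul_sum]
    _ = ∑ x : Ω × Ω, (R ∩ E).indicator w x.1 * (R ∩ F).indicator w x.2 := by
        have hσ : Involutive fun x : Ω × Ω => (mix x.1 x.2, mix x.2 x.1) := fun x => by
          simp [hmix]
        exact (Fintype.sum_bijective _ hσ.bijective _ _ fun x => (key x.1 x.2).symm).symm
    _ = (∑ ω, (R ∩ E).indicator w ω) * ∑ ω, (R ∩ F).indicator w ω := by
        rw [Fintype.sum_prod_type, sum_mul_sum]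

theorem Hist.ext_inj {t : ℕ} {h h' : Hist 𝒴 𝒰 t} {y y' : 𝒴} {u u' a a' : 𝒰} :
    h.ext y u a = h'.ext y' u' a' ↔ h = h' ∧ y = y' ∧ u = u' ∧ a = a' := by
  delta Hist at h h' ⊢
  simp only [Hist.ext, Prod.ext_iff, Fin.snoc_inj]
  tauto

namespace System

variable (M : System 𝒳 𝒮 𝒴 𝒰 𝒲 𝒵 𝒩) (g : Strat 𝒴 𝒰)

theorem pΩ_apply (ω : M.Ω) :
    M.pΩ ω = M.pX0 ω.1 * M.pS0 ω.2.1 * (∏ i, M.pW (ω.2.2.1 i)) *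
      (∏ i, M.pZ (ω.2.2.2.1 i)) * ∏ i, M.pN (ω.2.2.2.2 i) := by
  obtain ⟨x, s, w, z, n⟩ := ω
  simp only [pΩ, PMF.bind_apply, PMF.map_apply, ← pmfVec_apply]
  rw [tsum_eq_single x, tsum_eq_single s, tsum_eq_single w, tsum_eq_single z, tsum_eq_single n]
  · simp [mul_assoc]
  all_goals intro a ha; simp [Ne.symm ha]

theorem X_succ (ω : M.Ω) (t : ℕ) :
    M.X g ω (t + 1) = M.f (M.X g ω t) (M.Uh g ω t) (vget ω.2.2.1 t) := rfl

theorem Y_succ (ω : M.Ω) (t : ℕ) :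
    M.Y g ω (t + 1) = M.o (M.X g ω (t + 1)) (vget ω.2.2.2.1 (t + 1)) := by
  simp [Y, H, X, traj, Hist.ext]

theorem S_succ (ω : M.Ω) (t : ℕ) :
    M.S g ω (t + 1) =
      M.fh (M.S g ω t) (M.Uai g ω t) (M.Y g ω (t + 1)) (vget ω.2.2.2.2 t) := by
  rw [Y_succ]; rfl

theorem H_succ (ω : M.Ω) (t : ℕ) :
    M.H g ω (t + 1) = (M.H g ω t).ext (M.Y g ω (t + 1)) (M.Uh g ω t) (M.Uai g ω t) := by
  rw [Y_succ]; rfl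

/-- The system randomness `(x₀, W, Z)` of `ω` with the human randomness `(s₀, N)` of `ω'`. -/
def mix (ω ω' : M.Ω) : M.Ω := (ω.1, ω'.2.1, ω.2.2.1, ω.2.2.2.1, ω'.2.2.2.2)

theorem traj_mix {ω ω' : M.Ω} {t : ℕ} (hH : M.H g ω t = M.H g ω' t) :
    M.X g (M.mix ω ω') t = M.X g ω t ∧ M.S g (M.mix ω ω') t = M.S g ω' t ∧
      M.H g (M.mix ω ω') t = M.H g ω t := by
  induction t with
  | zero => exact ⟨rfl, rfl, rfl⟩
  | succ t ih =>
    rw [H_succ, H_succ, Hist.ext_inj] at hH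
    obtain ⟨hHt, hY, hUh, -⟩ := hH
    obtain ⟨hX, hS, hH⟩ := ih hHt
    have hUai : M.Uai g (M.mix ω ω') t = M.Uai g ω' t := by
      simp only [Uai, hH, hHt]
    have hU : M.Uh g (M.mix ω ω') t = M.Uh g ω t := by
      rw [hUh]; simp only [Uh, hS, hUai]
    have hXs : M.X g (M.mix ω ω') (t + 1) = M.X g ω (t + 1) := by
      rw [X_succ, X_succ, hX, hU]; rfl
    have hYs : M.Y g (M.mix ω ω') (t + 1) = M.Y g ω (t + 1) := by
      rw [Y_succ, Y_succ, hXs]; rfl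
    refine ⟨hXs, ?_, ?_⟩
    · rw [S_succ, S_succ, hS, hUai, hYs, hY]; rfl
    · rw [H_succ, H_succ, hH, hYs, hU, hUai]
      simp only [Uai, hHt]

/-- `(W_t, Z_{t+1})`. -/
def stepNoise (t : ℕ) (ω : M.Ω) : 𝒲 × 𝒵 := (vget ω.2.2.1 t, vget ω.2.2.2.1 (t + 1))

/-- `ht` keeps the index `t + 1` from wrapping around in `vget`. -/
def resample {t : ℕ} (ht : t < M.T) (ω : M.Ω) (c : 𝒲 × 𝒵) : M.Ω :=
  (ω.1, ω.2.1, update ω.2.2.1 ⟨t, by omega⟩ c.1, update ω.2.2.2.1 ⟨t + 1, by omega⟩ c.2,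
    ω.2.2.2.2)

theorem Y_succ_eq_stepNoise (ω : M.Ω) (t : ℕ) :
    M.Y g ω (t + 1) =
      M.o (M.f (M.X g ω t) (M.Uh g ω t) (M.stepNoise t ω).1) (M.stepNoise t ω).2 := by
  rw [Y_succ, X_succ]; rfl

theorem stepNoise_resample {t : ℕ} (ht : t < M.T) (ω : M.Ω) (c : 𝒲 × 𝒵) :
    M.stepNoise t (M.resample ht ω c) = c :=
  Prod.ext (vget_update_self _ ⟨t, by omega⟩ c.1) (vget_update_self _ ⟨t + 1, by omega⟩ c.2)

theorem resample_resample_stepNoise {t : ℕ} (ht : t < M.T) (ω : M.Ω) (c : 𝒲 × 𝒵) :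
    M.resample ht (M.resample ht ω c) (M.stepNoise t ω) = ω := by
  simp only [resample, stepNoise, vget_of_lt _ (show t < M.T + 1 by omega),
    vget_of_lt _ (show t + 1 < M.T + 1 by omega), update_idem, update_eq_self]

theorem traj_resample {t : ℕ} (ht : t < M.T) (ω : M.Ω) (c : 𝒲 × 𝒵) :
    ∀ s ≤ t, M.traj g (M.resample ht ω c) s = M.traj g ω s := by
  intro s hs
  induction s with
  | zero =>
    simp only [traj, resample]
    rw [vget_update_of_lt _ ⟨t + 1, by omega⟩ _ (show 0 < t + 1 by omega)]
  | succ s ih =>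
    simp only [traj, ih (by omega)]
    simp only [resample]
    rw [vget_update_of_lt _ ⟨t, by omega⟩ _ (show s < t by omega),
      vget_update_of_lt _ ⟨t + 1, by omega⟩ _ (show s + 1 < t + 1 by omega)]

theorem pΩ_resample_mul {t : ℕ} (ht : t < M.T) (ω : M.Ω) (c : 𝒲 × 𝒵) :
    M.pΩ (M.resample ht ω c) * (M.pW (M.stepNoise t ω).1 * M.pZ (M.stepNoise t ω).2)
      = M.pΩ ω * (M.pW c.1 * M.pZ c.2) := by
  have regroup : ∀ x s w z n a b : ℝ≥0∞,
      x * s * w * z * n * (a * b) = x * s * (w * a) * (z * b) * n := fun _ _ _ _ _ _ _ => by ring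
  simp only [pΩ_apply, resample, stepNoise, vget_of_lt _ (show t < M.T + 1 by omega),
    vget_of_lt _ (show t + 1 < M.T + 1 by omega), regroup, prod_update_mul]

theorem sum_Po_mul_Pt [Fintype 𝒳] [Fintype 𝒲] [Fintype 𝒵] (y : 𝒴) (x : 𝒳) (u : 𝒰) :
    ∑ x', M.Po y x' * M.Pt x' x u = ∑ c : 𝒲 × 𝒵,
      (M.pW c.1 * M.pZ c.2).toReal * {c | M.o (M.f x u c.1) c.2 = y}.indicator 1 c := by
  simp only [Po, Pt, toReal_toOuterMeasure_eq_sum, Fintype.sum_prod_type, ENNReal.toReal_mul,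
    sum_mul, mul_sum]
  rw [sum_comm]
  refine sum_congr rfl fun a _ => ?_
  rw [sum_comm]
  refine sum_congr rfl fun b _ => ?_
  rw [sum_eq_single (M.f x u a)]
  · by_cases hy : M.o (M.f x u a) b = y <;> simp [hy]; ring
  · intro x' _ hx'
    simp [Ne.symm hx']
  · simp

section Finite

variable [Fintype 𝒳] [Fintype 𝒮] [Fintype 𝒲] [Fintype 𝒵] [Fintype 𝒩]

theorem pr_eq_sum (A : Set M.Ω) :
    M.pr A = ∑ ω, A.indicator (fun ω => (M.pΩ ω).toReal) ω :=
  toReal_toOuterMeasure_eq_sum _ _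

theorem pr_X_inter_H_Uh_mul {t : ℕ} (h : Hist 𝒴 𝒰 t) (x : 𝒳) (uh : 𝒰) :
    M.pr ({ω | M.X g ω t = x} ∩ {ω | M.H g ω t = h ∧ M.Uh g ω t = uh}) * M.pr {ω | M.H g ω t = h}
      = M.pr ({ω | M.X g ω t = x} ∩ {ω | M.H g ω t = h}) *
          M.pr {ω | M.H g ω t = h ∧ M.Uh g ω t = uh} := by
  have hmix : ∀ {p q : M.Ω}, M.H g p t = h → M.H g q t = h →
      M.X g (M.mix p q) t = M.X g p t ∧ M.Uh g (M.mix p q) t = M.Uh g q t ∧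
        M.H g (M.mix p q) t = h := by
    intro p q hp hq
    obtain ⟨hX, hS, hH⟩ := M.traj_mix g (hp.trans hq.symm)
    exact ⟨hX, by simp only [Uh, Uai, hS, hH, hp, hq], hH.trans hp⟩
  have key := sum_indicator_inter_mul_eq_of_swap (fun ω => (M.pΩ ω).toReal) M.mix
    (fun _ _ => rfl) (fun p q => by simp only [pΩ_apply, mix, ENNReal.toReal_mul]; ring)
    (R := {ω | M.H g ω t = h}) (E := {ω | M.X g ω t = x}) (F := {ω | M.Uh g ω t = uh})
    (fun p hp q hq => (hmix hp hq).2.2)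
    (fun p hp q hq => by simp only [Set.mem_ofPred_eq, (hmix hp hq).1])
    (fun p hp q hq => by simp only [Set.mem_ofPred_eq, (hmix hp hq).2.1])
  have hsets : {ω | M.X g ω t = x} ∩ {ω | M.H g ω t = h ∧ M.Uh g ω t = uh}
      = {ω | M.H g ω t = h} ∩ {ω | M.X g ω t = x} ∩ {ω | M.Uh g ω t = uh} := by
    ext ω
    simp only [Set.mem_inter_iff, Set.mem_ofPred_eq]
    tauto
  rw [pr_eq_sum, pr_eq_sum, pr_eq_sum, pr_eq_sum, hsets, Set.inter_comm {ω | M.X g ω t = x}]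
  exact key

theorem pr_Y_succ_inter {t : ℕ} (ht : t < M.T) (h : Hist 𝒴 𝒰 t) (uh : 𝒰) (y' : 𝒴) :
    M.pr ({ω | M.Y g ω (t + 1) = y'} ∩ {ω | M.H g ω t = h ∧ M.Uh g ω t = uh})
      = ∑ x, M.pr ({ω | M.X g ω t = x} ∩ {ω | M.H g ω t = h ∧ M.Uh g ω t = uh}) *
          ∑ x', M.Po y' x' * M.Pt x' x uh := by
  set E := {ω | M.H g ω t = h ∧ M.Uh g ω t = uh}
  set w : M.Ω → ℝ := fun ω => (M.pΩ ω).toReal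
  set G : 𝒳 → 𝒲 × 𝒵 → ℝ := fun x => {c | M.o (M.f x uh c.1) c.2 = y'}.indicator 1
  have hsplit : ∀ ω, ({ω | M.Y g ω (t + 1) = y'} ∩ E).indicator w ω
      = ∑ x, ({ω | M.X g ω t = x} ∩ E).indicator w ω * G x (M.stepNoise t ω) := by
    intro ω
    by_cases hω : ω ∈ E
    · rw [sum_eq_single (M.X g ω t) (fun x _ hx => by simp [Ne.symm hx]) (by simp),
        Set.indicator_of_mem (show ω ∈ {ω' | M.X g ω' t = M.X g ω t} ∩ E from ⟨rfl, hω⟩)]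
      have hY : M.Y g ω (t + 1) =
          M.o (M.f (M.X g ω t) uh (M.stepNoise t ω).1) (M.stepNoise t ω).2 :=
        hω.2 ▸ M.Y_succ_eq_stepNoise g ω t
      by_cases hy : M.Y g ω (t + 1) = y'
      · simp [G, Set.indicator_of_mem, hω, hy, ← hY]
      · simp [G, Set.indicator_of_notMem, hy, ← hY]
    · simp [Set.indicator_of_notMem, hω]
  have hq : ∑ c : 𝒲 × 𝒵, (M.pW c.1 * M.pZ c.2).toReal = 1 := by
    simp [Fintype.sum_prod_type, ENNReal.toReal_mul, ← mul_sum, sum_toReal_apply]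
  rw [pr_eq_sum, sum_congr rfl fun ω _ => hsplit ω, sum_comm]
  refine sum_congr rfl fun x _ => ?_
  rw [sum_indicator_mul_eq_of_resample w (fun c => (M.pW c.1 * M.pZ c.2).toReal) hq
    (M.stepNoise t) (M.resample ht) (M.stepNoise_resample ht)
    (M.resample_resample_stepNoise ht)
    (fun ω c => by simp only [w, ← ENNReal.toReal_mul, pΩ_resample_mul])
    (fun ω c => by
      simp only [E, Set.mem_inter_iff, Set.mem_ofPred_eq, X, H, Uh, Uai, S,
        M.traj_resample g ht ω c t le_rfl]),
    pr_eq_sum, sum_Po_mul_Pt]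

end Finite

end System

theorem statement_7_general {𝒳 𝒮 𝒴 𝒰 𝒲 𝒵 𝒩 : Type}
    [Fintype 𝒳] [Fintype 𝒮] [Fintype 𝒲] [Fintype 𝒵] [Fintype 𝒩]
    (M : System 𝒳 𝒮 𝒴 𝒰 𝒲 𝒵 𝒩) (g : Strat 𝒴 𝒰)
    (t : ℕ) (ht : t < M.T) (h : Hist 𝒴 𝒰 t)
    (uh : 𝒰) (hu : 0 < M.cpr {ω | M.Uh g ω t = uh} {ω | M.H g ω t = h}) (y' : 𝒴) :
    M.cpr {ω | M.Y g ω (t + 1) = y'} {ω | M.H g ω t = h ∧ M.Uh g ω t = uh}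
      = ∑ x', ∑ x, M.Po y' x' * M.Pt x' x uh * M.bX g h x := by
  rw [System.cpr, Set.inter_comm] at hu
  have hHU : M.pr {ω | M.H g ω t = h ∧ M.Uh g ω t = uh} ≠ 0 := by
    intro h0
    simp [← Set.ofPred_and, h0] at hu
  have hH : M.pr {ω | M.H g ω t = h} ≠ 0 := by
    intro h0
    simp [h0] at hu
  have hbX : ∀ x, M.pr ({ω | M.X g ω t = x} ∩ {ω | M.H g ω t = h ∧ M.Uh g ω t = uh}) /
      M.pr {ω | M.H g ω t = h ∧ M.Uh g ω t = uh} = M.bX g h x := fun x => by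
    rw [System.bX, System.cpr, div_eq_div_iff hHU hH, M.pr_X_inter_H_Uh_mul]
  rw [System.cpr, M.pr_Y_succ_inter g ht, Finset.sum_div, Finset.sum_comm]
  refine Finset.sum_congr rfl fun x _ => ?_
  rw [mul_div_right_comm, hbX, mul_comm, Finset.sum_mul]

/-- the one-step predicted observation distribution depends on the
history only through `b_t^x` (and is independent of the human control law). -/
theorem statement_7 {𝒳 𝒮 𝒴 𝒰 𝒲 𝒵 𝒩 : Type}
    [Fintype 𝒳] [Fintype 𝒮] [Fintype 𝒴] [Fintype 𝒰] [Fintype 𝒲] [Fintype 𝒵] [Fintype 𝒩]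
    [Nonempty 𝒳] [Nonempty 𝒮] [Nonempty 𝒴] [Nonempty 𝒰] [DecidableEq 𝒰]
    (M : System 𝒳 𝒮 𝒴 𝒰 𝒲 𝒵 𝒩) (g : Strat 𝒴 𝒰)
    (t : ℕ) (ht : t < M.T) (h : Hist 𝒴 𝒰 t)
    (hpos : 0 < M.pr {ω | M.H g ω t = h})
    (uh : 𝒰) (hu : 0 < M.cpr {ω | M.Uh g ω t = uh} {ω | M.H g ω t = h}) (y' : 𝒴) :
    M.cpr {ω | M.Y g ω (t + 1) = y'} {ω | M.H g ω t = h ∧ M.Uh g ω t = uh}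
      = ∑ x', ∑ x, M.Po y' x' * M.Pt x' x uh * M.bX g h x :=
  statement_7_general M g t ht h uh hu y'

end CPHS
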